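/- Let ω be an invertible antisymmetric real n×n matrix and α an antisymmetric real n×n matrix. Let T_p (p ≥ 1) be defined by T_1 = (1/2)·α and T_p = (1/2)·Σ_{l=1}^{p-1} T_l ⋄ T_{p-l} for p ≥ 2, and let V_p (p ≥ 0) be defined by V_0 = -ω and V_p = Σ_{l=1}^{p} T_l ⋄ V_{p-l} for p ≥ 1. Then for every p ≥ 1, Σ_{l=0}^{p} V_l ⋄ V_{p-l} = α^{⋄p}. -/

import Mathlib

/-!
Put `E k = -ω (-ω⁻¹ α)ᵏ`. Skew-symmetry of `ω` and `α` makes every `E k` skew, whence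
`E k ⋄ E m = E (k + m)`, `E 0 = -ω` and `E 1 = α`. So by induction `T p = τ p • E p` and
`V p = ν p • E p` for real sequences `τ`, `ν` obeying the same recursions with `⋄` replaced by
multiplication. Their generating functions satisfy `(1 - t)² = 1 - X` and `(1 - t) v = 1`, so
`v² = (1 - X)⁻¹`: the convolution `∑ ν l ν (p - l)` is `1`, and the sum is `E p = α^{⋄p}`.
-/

open Matrix

/-- Covariant diamond contraction: `(α ⋄ β) = αᵀ * ω⁻¹ * β`. -/
noncomputable def diamondCov {n : ℕ} (ω α β : Matrix (Fin n) (Fin n) ℝ) :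
    Matrix (Fin n) (Fin n) ℝ :=
  αᵀ * ω⁻¹ * β

/-- Diamond powers: `α^{⋄1} = α`, `α^{⋄(k+1)} = α ⋄ α^{⋄k}`. -/
noncomputable def diamondPow {n : ℕ} (ω α : Matrix (Fin n) (Fin n) ℝ) :
    ℕ → Matrix (Fin n) (Fin n) ℝ
  | 0 => 1
  | 1 => α
  | (k + 2) => diamondCov ω α (diamondPow ω α (k + 1))

open PowerSeries Finset

/-- The coefficients of `1 - √(1 - X)`, the power series `t` with `t(0) = 0` and `2t - t² = X`. -/
noncomputable def oneSubSqrtCoeff : ℕ → ℝ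
  | 0 => 0
  | 1 => 1 / 2
  | p + 2 => 1 / 2 * ∑ l ∈ (Ico 1 (p + 2)).attach, oneSubSqrtCoeff l * oneSubSqrtCoeff (p + 2 - l)
decreasing_by
  all_goals have := mem_Ico.mp l.2; omega

/-- The coefficients of `1 / (1 - t) = (1 - X)^(-1/2)`, where `t = 1 - √(1 - X)`. -/
noncomputable def invSqrtCoeff : ℕ → ℝ
  | 0 => 1
  | p + 1 => ∑ l ∈ (Icc 1 (p + 1)).attach, oneSubSqrtCoeff l * invSqrtCoeff (p + 1 - l)
decreasing_by
  have := mem_Icc.mp l.2; omega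

@[simp] lemma oneSubSqrtCoeff_zero : oneSubSqrtCoeff 0 = 0 := by
  rw [oneSubSqrtCoeff]

@[simp] lemma oneSubSqrtCoeff_one : oneSubSqrtCoeff 1 = 1 / 2 := by
  rw [oneSubSqrtCoeff]

lemma oneSubSqrtCoeff_eq {p : ℕ} (hp : 2 ≤ p) :
    oneSubSqrtCoeff p = 1 / 2 * ∑ l ∈ Ico 1 p, oneSubSqrtCoeff l * oneSubSqrtCoeff (p - l) := by
  obtain ⟨q, rfl⟩ : ∃ q, p = q + 2 := ⟨p - 2, by omega⟩
  rw [oneSubSqrtCoeff]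
  congr 1
  exact sum_attach (Ico 1 (q + 2)) fun l ↦ oneSubSqrtCoeff l * oneSubSqrtCoeff (q + 2 - l)

@[simp] lemma invSqrtCoeff_zero : invSqrtCoeff 0 = 1 := by
  rw [invSqrtCoeff]

lemma invSqrtCoeff_eq {p : ℕ} (hp : 1 ≤ p) :
    invSqrtCoeff p = ∑ l ∈ Icc 1 p, oneSubSqrtCoeff l * invSqrtCoeff (p - l) := by
  obtain ⟨q, rfl⟩ : ∃ q, p = q + 1 := ⟨p - 1, by omega⟩
  rw [invSqrtCoeff]
  exact sum_attach (Icc 1 (q + 1)) fun l ↦ oneSubSqrtCoeff l * invSqrtCoeff (q + 1 - l)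

lemma coeff_mk_mul_mk {R : Type*} [CommSemiring R] (f g : ℕ → R) (m : ℕ) :
    coeff m (mk f * mk g) = ∑ l ∈ range (m + 1), f l * g (m - l) := by
  simp [coeff_mul, Nat.sum_antidiagonal_eq_sum_range_succ_mk]

lemma sum_range_succ_mul_eq_sum_Icc {R : Type*} [CommSemiring R] {f : ℕ → R} (hf : f 0 = 0)
    (g : ℕ → R) (m : ℕ) :
    ∑ l ∈ range (m + 1), f l * g (m - l) = ∑ l ∈ Icc 1 m, f l * g (m - l) := by
  rw [range_eq_Ico, sum_eq_sum_Ico_succ_bot (by omega : 0 < m + 1), hf, zero_mul, zero_add,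
    Ico_add_one_right_eq_Icc]

lemma mk_oneSubSqrtCoeff_mul_self_add_X :
    mk oneSubSqrtCoeff * mk oneSubSqrtCoeff + X = 2 * (mk oneSubSqrtCoeff : ℝ⟦X⟧) := by
  ext m
  rw [two_mul, map_add, map_add, coeff_mk, coeff_mk_mul_mk, coeff_X,
    sum_range_succ_mul_eq_sum_Icc oneSubSqrtCoeff_zero]
  match m with
  | 0 => simp
  | 1 => norm_num
  | q + 2 =>
    rw [← Ico_add_one_right_eq_Icc, sum_Ico_succ_top (by omega), Nat.sub_self,
      oneSubSqrtCoeff_zero, mul_zero, add_zero, if_neg (by omega), add_zero,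
      oneSubSqrtCoeff_eq (by omega)]
    ring

lemma one_sub_mk_oneSubSqrtCoeff_mul_mk_invSqrtCoeff :
    (1 - mk oneSubSqrtCoeff) * (mk invSqrtCoeff : ℝ⟦X⟧) = 1 := by
  ext m
  rw [sub_mul, one_mul, map_sub, coeff_mk, coeff_mk_mul_mk, coeff_one,
    sum_range_succ_mul_eq_sum_Icc oneSubSqrtCoeff_zero]
  rcases Nat.eq_zero_or_pos m with rfl | hm
  · simp
  · rw [← invSqrtCoeff_eq hm, sub_self, if_neg hm.ne']

-- `v² (1 - X) = ((1 - t) v)² = 1`, so `v² = (1 - X)⁻¹ = ∑ Xᵖ`.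
lemma mk_invSqrtCoeff_mul_self : mk invSqrtCoeff * mk invSqrtCoeff = (mk 1 : ℝ⟦X⟧) := by
  have hA := one_sub_mk_oneSubSqrtCoeff_mul_mk_invSqrtCoeff
  have hB := mk_oneSubSqrtCoeff_mul_self_add_X
  have hG := mk_one_mul_one_sub_eq_one ℝ
  set t : ℝ⟦X⟧ := mk oneSubSqrtCoeff
  set v : ℝ⟦X⟧ := mk invSqrtCoeff
  linear_combination (-(v * v)) * hG + mk 1 * (-(v * v) * hB + ((1 - t) * v + 1) * hA)

lemma sum_range_invSqrtCoeff_mul (p : ℕ) :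
    ∑ l ∈ range (p + 1), invSqrtCoeff l * invSqrtCoeff (p - l) = 1 := by
  simpa [coeff_mk_mul_mk] using congrArg (coeff p) mk_invSqrtCoeff_mul_self

lemma transpose_nonsing_inv_of_transpose_eq_neg {m R : Type*} [Fintype m] [DecidableEq m]
    [CommRing R] {ω : Matrix m m R} (hω : IsUnit ω.det) (hωskew : ωᵀ = -ω) :
    ω⁻¹ᵀ = -ω⁻¹ := by
  rw [transpose_nonsing_inv, hωskew]
  exact inv_eq_left_inv (by rw [neg_mul_neg, nonsing_inv_mul ω hω])

section Diamond

variable {n : ℕ} {ω α : Matrix (Fin n) (Fin n) ℝ}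

noncomputable def diamondMonomial (ω α : Matrix (Fin n) (Fin n) ℝ) (k : ℕ) :
    Matrix (Fin n) (Fin n) ℝ :=
  -(ω * (-(ω⁻¹ * α)) ^ k)

lemma diamondMonomial_one (hω : IsUnit ω.det) : diamondMonomial ω α 1 = α := by
  rw [diamondMonomial, pow_one, mul_neg, neg_neg, ← Matrix.mul_assoc, mul_nonsing_inv ω hω,
    Matrix.one_mul]

lemma transpose_diamondMonomial (hω : IsUnit ω.det) (hωskew : ωᵀ = -ω) (hα : αᵀ = -α) (k : ℕ) :
    (diamondMonomial ω α k)ᵀ = -diamondMonomial ω α k := by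
  have hconj : SemiconjBy ω (-(ω⁻¹ * α)) (-(ω⁻¹ * α))ᵀ := by
    rw [transpose_neg, transpose_mul, hα, transpose_nonsing_inv_of_transpose_eq_neg hω hωskew,
      SemiconjBy, mul_neg, ← Matrix.mul_assoc, mul_nonsing_inv ω hω, Matrix.one_mul, neg_mul_neg,
      neg_mul, Matrix.mul_assoc, nonsing_inv_mul ω hω, Matrix.mul_one]
  rw [diamondMonomial, transpose_neg, transpose_mul, transpose_pow, hωskew, mul_neg, neg_neg,
    ← (hconj.pow_right k).eq, neg_neg]

lemma diamondCov_diamondMonomial (hω : IsUnit ω.det) (hωskew : ωᵀ = -ω) (hα : αᵀ = -α)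
    (k m : ℕ) :
    diamondCov ω (diamondMonomial ω α k) (diamondMonomial ω α m) = diamondMonomial ω α (k + m) := by
  rw [diamondCov, transpose_diamondMonomial hω hωskew hα, diamondMonomial, diamondMonomial,
    diamondMonomial, neg_neg, Matrix.mul_neg, Matrix.mul_assoc, Matrix.mul_assoc,
    ← Matrix.mul_assoc ω⁻¹, nonsing_inv_mul ω hω, Matrix.one_mul, pow_add]

lemma diamondCov_smul_smul (c d : ℝ) (A B : Matrix (Fin n) (Fin n) ℝ) :
    diamondCov ω (c • A) (d • B) = (c * d) • diamondCov ω A B := by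
  simp only [diamondCov, transpose_smul, Matrix.smul_mul, Matrix.mul_smul, smul_smul, mul_comm d c]

lemma sum_diamondCov_smul_diamondMonomial (hω : IsUnit ω.det) (hωskew : ωᵀ = -ω)
    (hα : αᵀ = -α) (f g : ℕ → ℝ) {s : Finset ℕ} {p : ℕ} (hs : ∀ l ∈ s, l ≤ p) :
    ∑ l ∈ s, diamondCov ω (f l • diamondMonomial ω α l) (g (p - l) • diamondMonomial ω α (p - l))
      = (∑ l ∈ s, f l * g (p - l)) • diamondMonomial ω α p := by
  rw [sum_smul]
  refine sum_congr rfl fun l hl ↦ ?_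
  rw [diamondCov_smul_smul, diamondCov_diamondMonomial hω hωskew hα, Nat.add_sub_cancel' (hs l hl)]

lemma diamondPow_eq_diamondMonomial (hω : IsUnit ω.det) (hωskew : ωᵀ = -ω) (hα : αᵀ = -α) :
    ∀ p, 1 ≤ p → diamondPow ω α p = diamondMonomial ω α p
  | 1, _ => (diamondMonomial_one hω).symm
  | p + 2, _ => by
    rw [diamondPow, diamondPow_eq_diamondMonomial hω hωskew hα (p + 1) (by omega)]
    calc diamondCov ω α (diamondMonomial ω α (p + 1))
        = diamondCov ω (diamondMonomial ω α 1) (diamondMonomial ω α (p + 1)) := by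
          rw [diamondMonomial_one hω]
      _ = diamondMonomial ω α (p + 2) := by
          rw [diamondCov_diamondMonomial hω hωskew hα, add_comm]

lemma eq_oneSubSqrtCoeff_smul_diamondMonomial (hω : IsUnit ω.det) (hωskew : ωᵀ = -ω) (hα : αᵀ = -α)
    {T : ℕ → Matrix (Fin n) (Fin n) ℝ}
    (hT1 : T 1 = (1/2 : ℝ) • α)
    (hTrec : ∀ p : ℕ, 2 ≤ p →
      T p = (1/2 : ℝ) • ∑ l ∈ Ico 1 p, diamondCov ω (T l) (T (p - l))) :
    ∀ p, 1 ≤ p → T p = oneSubSqrtCoeff p • diamondMonomial ω α p := by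
  intro p hp
  induction p using Nat.strong_induction_on with
  | _ p ih =>
    obtain rfl | hp2 := hp.eq_or_lt
    · rw [hT1, oneSubSqrtCoeff_one, diamondMonomial_one hω]
    have hsum : ∑ l ∈ Ico 1 p, diamondCov ω (T l) (T (p - l)) = ∑ l ∈ Ico 1 p,
        diamondCov ω (oneSubSqrtCoeff l • diamondMonomial ω α l)
          (oneSubSqrtCoeff (p - l) • diamondMonomial ω α (p - l)) :=
      sum_congr rfl fun l hl ↦ by
        obtain ⟨hl1, hlp⟩ := mem_Ico.mp hl
        rw [ih l hlp hl1, ih (p - l) (by omega) (by omega)]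
    rw [hTrec p hp2, hsum, sum_diamondCov_smul_diamondMonomial hω hωskew hα _ _
      fun l hl ↦ (mem_Ico.mp hl).2.le, smul_smul, ← oneSubSqrtCoeff_eq hp2]

lemma eq_invSqrtCoeff_smul_diamondMonomial (hω : IsUnit ω.det) (hωskew : ωᵀ = -ω) (hα : αᵀ = -α)
    {T V : ℕ → Matrix (Fin n) (Fin n) ℝ}
    (hT : ∀ p, 1 ≤ p → T p = oneSubSqrtCoeff p • diamondMonomial ω α p)
    (hV0 : V 0 = -ω)
    (hVrec : ∀ p : ℕ, 1 ≤ p → V p = ∑ l ∈ Icc 1 p, diamondCov ω (T l) (V (p - l))) :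
    ∀ p, V p = invSqrtCoeff p • diamondMonomial ω α p := by
  intro p
  induction p using Nat.strong_induction_on with
  | _ p ih =>
    rcases Nat.eq_zero_or_pos p with rfl | hp
    · simp [hV0, diamondMonomial]
    have hsum : ∑ l ∈ Icc 1 p, diamondCov ω (T l) (V (p - l)) = ∑ l ∈ Icc 1 p,
        diamondCov ω (oneSubSqrtCoeff l • diamondMonomial ω α l)
          (invSqrtCoeff (p - l) • diamondMonomial ω α (p - l)) :=
      sum_congr rfl fun l hl ↦ by
        obtain ⟨hl1, hlp⟩ := mem_Icc.mp hl
        rw [hT l hl1, ih (p - l) (by omega)]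
    rw [hVrec p hp, hsum, sum_diamondCov_smul_diamondMonomial hω hωskew hα _ _
      fun l hl ↦ (mem_Icc.mp hl).2, ← invSqrtCoeff_eq hp]

end Diamond

theorem V_convolution_eq_diamondPow {n : ℕ} (ω α : Matrix (Fin n) (Fin n) ℝ)
    (hω : IsUnit ω.det) (hωskew : ωᵀ = -ω) (hα : αᵀ = -α)
    (T V : ℕ → Matrix (Fin n) (Fin n) ℝ)
    (hT1 : T 1 = (1/2 : ℝ) • α)
    (hTrec : ∀ p : ℕ, 2 ≤ p →
      T p = (1/2 : ℝ) • ∑ l ∈ Finset.Ico 1 p, diamondCov ω (T l) (T (p - l)))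
    (hV0 : V 0 = -ω)
    (hVrec : ∀ p : ℕ, 1 ≤ p →
      V p = ∑ l ∈ Finset.Icc 1 p, diamondCov ω (T l) (V (p - l))) :
    ∀ p : ℕ, 1 ≤ p →
      ∑ l ∈ Finset.range (p + 1), diamondCov ω (V l) (V (p - l)) = diamondPow ω α p := by
  intro p hp
  have hV := eq_invSqrtCoeff_smul_diamondMonomial hω hωskew hα
    (eq_oneSubSqrtCoeff_smul_diamondMonomial hω hωskew hα hT1 hTrec) hV0 hVrec
  simp only [hV]
  rw [sum_diamondCov_smul_diamondMonomial hω hωskew hα _ _ fun _ ↦ mem_range_succ_iff.mp,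
    sum_range_invSqrtCoeff_mul, one_smul, diamondPow_eq_diamondMonomial hω hωskew hα p hp]
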